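/- arXiv:2212.05018 — 3 statements merged into one kernel-verified Lean document; each statement's English description precedes it below -/
import Mathlib

section
/- Let R be an excellent discrete valuation ring of equal characteristic p > 0 with fraction field K and residue field κ, and suppose [K : K^p] is finite. Then [K : K^p] = p · [κ : κ^p]; equivalently, the degree of imperfection satisfies δ(K) = δ(κ) + 1. -/
/-!
Statement 0: Let `R` be an excellent discrete valuation ring of equal characteristic `p > 0`
with fraction field `K` and residue field `κ`, and suppose `[K : K^p]` is finite.
Then `[K : K^p] = p * [κ : κ^p]`.

Here `K^p` is formalized as the field range of the Frobenius endomorphism, and excellence is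
formalized via the N-2/Japanese property (equivalent to excellence for discrete valuation rings
of equal characteristic).
-/

/-- N-2/Japanese property: the integral closure of `R` in any finite extension of its fraction
field is a finite `R`-module.  For discrete valuation rings of equal characteristic this is
equivalent to excellence. -/
def IsExcellentDomain (R : Type) [CommRing R] [IsDomain R] : Prop :=
  ∀ (L : Type) (_ : Field L) (_ : Algebra (FractionRing R) L),
    FiniteDimensional (FractionRing R) L →
      letI : Algebra R L :=
        ((algebraMap (FractionRing R) L).comp (algebraMap R (FractionRing R))).toAlgebra
      Module.Finite R (integralClosure R L)

open Module

lemma finrank_eq_of_equiv_equiv' {R S R' S' : Type} [CommRing R] [Ring S] [Algebra R S]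
    [CommRing R'] [Ring S'] [Algebra R' S'] (i : R ≃+* R') (j : S ≃+* S')
    (hc : (algebraMap R' S').comp i.toRingHom = j.toRingHom.comp (algebraMap R S)) :
    finrank R S = finrank R' S' := by
  have := Algebra.rank_eq_of_equiv_equiv i j hc
  rw [finrank, finrank, this]

noncomputable def frobRangeEquiv (L : Type) [Field L] (p : ℕ) [Fact p.Prime] [CharP L p] :
    L ≃+* (frobenius L p).fieldRange :=
  RingEquiv.ofBijective ((frobenius L p).codRestrict
      (frobenius L p).fieldRange.toSubring (fun x => ⟨x, rfl⟩))
    ⟨fun _ _ h => (frobenius L p).injective (congrArg Subtype.val h),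
     fun ⟨y, x, hx⟩ => ⟨x, Subtype.ext hx⟩⟩

@[simp] lemma frobRangeEquiv_coe (L : Type) [Field L] (p : ℕ) [Fact p.Prime] [CharP L p] (x : L) :
    (frobRangeEquiv L p x : L) = x ^ p := rfl

set_option maxHeartbeats 1000000 in
set_option synthInstance.maxHeartbeats 200000 in
theorem degree_of_imperfection_of_excellent_dvr
    (R : Type) [CommRing R] [IsDomain R] [IsDiscreteValuationRing R]
    (p : ℕ) [Fact p.Prime] [CharP R p]
    [CharP (FractionRing R) p] [CharP (IsLocalRing.ResidueField R) p]
    (hexc : IsExcellentDomain R)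
    [Module.Finite (frobenius (FractionRing R) p).fieldRange (FractionRing R)] :
    Module.finrank (frobenius (FractionRing R) p).fieldRange (FractionRing R) =
      p * Module.finrank (frobenius (IsLocalRing.ResidueField R) p).fieldRange
            (IsLocalRing.ResidueField R) := by
  classical
  have hp : p.Prime := Fact.out
  set K := FractionRing R
  set κ := IsLocalRing.ResidueField R
  set φ : K →+* K := frobenius K p with hφ
  set F : Subfield K := φ.fieldRange with hF
  set j : R →+* K := φ.comp (algebraMap R K) with hj
  have hjinj : Function.Injective j :=
    φ.injective.comp (IsFractionRing.injective R K)
  set S₀ : Subring K := j.range with hS₀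
  have hjr : ∀ r : R, j r = (algebraMap R K r) ^ p := fun r => rfl
  let e : R ≃+* S₀ := RingEquiv.ofBijective j.rangeRestrict
    ⟨fun a b h => hjinj (congrArg Subtype.val h), j.rangeRestrict_surjective⟩
  have he : ∀ r : R, (e r : K) = j r := fun r => rfl
  letI : Algebra S₀ R := ((frobenius R p).comp e.symm.toRingHom).toAlgebra
  have halg : ∀ s : S₀, algebraMap S₀ R s = (e.symm s) ^ p := fun s => rfl
  have hcomp : ∀ s : S₀, algebraMap R K (algebraMap S₀ R s) = (s : K) := by
    intro s
    rw [halg, map_pow, ← hjr, ← he, RingEquiv.apply_symm_apply]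
  letI : Algebra S₀ K := Algebra.ofSubsemiring S₀
  letI := IsScalarTower.of_algebraMap_eq (R := S₀) (S := R) (A := K)
    (fun s => (hcomp s).symm)
  -- inclusion of S₀ into F
  have hmemF : ∀ s : S₀, (s : K) ∈ F := by
    rintro ⟨s, r, rfl⟩
    exact ⟨algebraMap R K r, rfl⟩
  let incl : S₀ →+* F :=
  { toFun := fun s => ⟨(s : K), hmemF s⟩
    map_one' := rfl
    map_mul' := fun a b => rfl
    map_zero' := rfl
    map_add' := fun a b => rfl }
  letI : Algebra S₀ F := incl.toAlgebra
  letI := IsScalarTower.of_algebraMap_eq (R := S₀) (S := F) (A := K) (fun s => rfl)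
  letI : IsPrincipalIdealRing S₀ := IsPrincipalIdealRing.of_surjective e.toRingHom e.surjective
  haveI : IsFractionRing S₀ F := by
    refine ⟨fun y => ?_, fun z => ?_, fun {a b} h => ⟨1, by
      have : (a : K) = (b : K) := congrArg (fun t : F => (t : K)) h
      simp [Subtype.ext this]⟩⟩
    · refine isUnit_iff_ne_zero.mpr (fun h0 => nonZeroDivisors.ne_zero y.2 ?_)
      exact Subtype.ext (congrArg (fun t : F => (t : K)) h0)
    · obtain ⟨x, hx⟩ := z.2
      obtain ⟨⟨a, b⟩, hab⟩ := IsLocalization.surj (M := nonZeroDivisors R) (S := K) x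
      have hbne : e b ≠ 0 := fun h0 => nonZeroDivisors.ne_zero b.2 (e.injective (by simp [h0]))
      refine ⟨⟨e a, ⟨e b, mem_nonZeroDivisors_iff_ne_zero.mpr hbne⟩⟩, ?_⟩
      apply Subtype.ext
      show (z : K) * ((e b : K)) = ((e a : K))
      rw [he, he, ← hx]
      calc φ x * j b = φ (x * algebraMap R K b) := by rw [map_mul]; rfl
        _ = φ (algebraMap R K a) := by rw [hab]
        _ = j a := rfl
  -- facts using the ambient algebra, proved before introducing twisted instances
  have hIC : ∀ x : K, (algebraMap R K).IsIntegralElem x → x ∈ (algebraMap R K).range :=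
    fun x hx => by
      obtain ⟨y, hy⟩ := IsIntegrallyClosed.isIntegral_iff.mp hx
      exact ⟨y, hy⟩
  have hfrobcomp : (algebraMap R K).comp (frobenius R p) = j := by
    ext r
    show algebraMap R K (r ^ p) = j r
    rw [map_pow]
    rfl
  let Rim : Subring K := (algebraMap R K).range
  let eR : R ≃+* Rim := RingEquiv.ofBijective (algebraMap R K).rangeRestrict
    ⟨fun a b h => IsFractionRing.injective R K (congrArg Subtype.val h),
      (algebraMap R K).rangeRestrict_surjective⟩
  have heR : ∀ r : R, (eR r : K) = algebraMap R K r := fun r => rfl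
  haveI hfin : Module.Finite S₀ R := by
    letI aKK : Algebra K K := φ.toAlgebra
    have heq : ((@algebraMap K K _ _ aKK).comp
        ((frobRangeEquiv K p).symm : F ≃+* K).toRingHom)
        = (RingEquiv.refl K).toRingHom.comp (algebraMap F K) := by
      ext x
      show φ ((frobRangeEquiv K p).symm x) = (x : K)
      conv_rhs => rw [← (frobRangeEquiv K p).apply_symm_apply x]
      rfl
    haveI hKfin : @Module.Finite K K _ _ (@Algebra.toModule _ _ _ _ aKK) :=
      @Module.Finite.of_equiv_equiv F K K K _ _ _ _ _ aKK
        (frobRangeEquiv K p).symm (RingEquiv.refl K) heq ‹Module.Finite F K›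
    have hKK := hexc K inferInstance aKK hKfin
    letI jAlg : Algebra R K := ((@algebraMap K K _ _ aKK).comp (algebraMap R K)).toAlgebra
    let A : Subalgebra R K := @integralClosure R K _ _ jAlg
    haveI hKK' : Module.Finite R A := hKK
    have hjalg : @algebraMap R K _ _ jAlg = j := rfl
    -- every element of A lies in the image of R
    have hup : ∀ x : A, (x : K) ∈ Rim := by
      rintro ⟨x, hx⟩
      have hx' : j.IsIntegralElem x := hx
      obtain ⟨q, hq1, hq2⟩ := hx'
      refine hIC x ⟨q.map (frobenius R p), hq1.map _, ?_⟩
      rwa [Polynomial.eval₂_map, hfrobcomp]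
    let ψ : A →+* Rim := (SubringClass.subtype A).codRestrict Rim hup
    have hψbij : Function.Bijective ψ := by
      constructor
      · exact fun a b h => Subtype.ext (congrArg (fun t : Rim => (t : K)) h)
      · rintro ⟨x, y, hy⟩
        have hxA : x ∈ A := by
          refine ⟨Polynomial.X ^ p - Polynomial.C y, Polynomial.monic_X_pow_sub_C y hp.ne_zero, ?_⟩
        
          rw [Polynomial.eval₂_sub, Polynomial.eval₂_X_pow, Polynomial.eval₂_C, hjalg, sub_eq_zero,
            ← hy, hjr]
        exact ⟨⟨x, hxA⟩, Subtype.ext rfl⟩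
    let eA : A ≃+* R := (RingEquiv.ofBijective ψ hψbij).trans eR.symm
    refine Module.Finite.of_equiv_equiv (A₁ := R) (B₁ := A) (A₂ := S₀) (B₂ := R) e eA ?_
    ext r
    show algebraMap S₀ R (e r) = eA ((algebraMap R A) r)
    have h1 : algebraMap S₀ R (e r) = r ^ p := by rw [halg, e.symm_apply_apply]
    have h3 : ψ ((algebraMap R A) r) = eR (r ^ p) := Subtype.ext (by
      show ((algebraMap R A r : A) : K) = (eR (r ^ p) : K)
      rw [heR, map_pow]
      rfl)
    have h2 : eA ((algebraMap R A) r) = r ^ p := by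
      show eR.symm (ψ ((algebraMap R A) r)) = r ^ p
      rw [h3, eR.symm_apply_apply]
    rw [h1, h2]
  set m : Ideal R := IsLocalRing.maximalIdeal R with hm
  set m₀ : Ideal S₀ := m.map (e : R →+* S₀) with hm₀
  haveI : m₀.IsMaximal := Ideal.IsMaximal.map_bijective e.toRingHom e.bijective inferInstance
  have hm0ne : m₀ ≠ ⊥ := fun h => IsDiscreteValuationRing.not_a_field R (by
    rwa [hm₀, Ideal.map_eq_bot_iff_of_injective (f := (e : R →+* S₀)) e.injective] at h)
  have hmne : m ≠ ⊥ := IsDiscreteValuationRing.not_a_field R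
  obtain ⟨π, hπ⟩ := Submodule.IsPrincipal.principal m
  have hπ' : m = Ideal.span {π} := hπ
  have hπ0 : π ≠ 0 := by
    rintro rfl
    exact hmne (hπ'.trans (Ideal.span_singleton_eq_bot.mpr rfl))
  have hπu : ¬IsUnit π := fun hu =>
    (IsLocalRing.maximalIdeal.isMaximal R).ne_top
      (hπ'.trans (Ideal.span_singleton_eq_top.mpr hu))
  have hmap : Ideal.map (algebraMap S₀ R) m₀ = m ^ p := by
    have h1 : ((algebraMap S₀ R).comp (e : R →+* S₀)) = frobenius R p := by
      ext r
      show algebraMap S₀ R (e r) = _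
      rw [halg, RingEquiv.symm_apply_apply]
      rfl
    rw [hm₀, Ideal.map_map, h1, hπ', Ideal.map_span, Set.image_singleton,
      Ideal.span_singleton_pow, frobenius_def]
  have hmprime : Prime m := Ideal.prime_of_isPrime hmne inferInstance
  have hmapne : Ideal.map (algebraMap S₀ R) m₀ ≠ 0 := by
    rw [hmap]
    exact pow_ne_zero p hmne
  have huniq : ∀ Q ∈ UniqueFactorizationMonoid.factors (Ideal.map (algebraMap S₀ R) m₀),
      Q = m := by
    intro Q hQ
    have hQp : Prime Q := UniqueFactorizationMonoid.prime_of_factor _ hQ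
    haveI hQP : Q.IsPrime := Ideal.isPrime_of_prime hQp
    have hQd : Q ∣ m ^ p := hmap ▸ UniqueFactorizationMonoid.dvd_of_mem_factors hQ
    have hle : m ≤ Q := hQP.le_of_pow_le (Ideal.le_of_dvd hQd)
    exact ((IsLocalRing.maximalIdeal.isMaximal R).eq_of_le hQP.ne_top hle).symm
  have hmm : m ∈ UniqueFactorizationMonoid.factors (Ideal.map (algebraMap S₀ R) m₀) := by
    obtain ⟨q, hq, hassoc⟩ := UniqueFactorizationMonoid.exists_mem_factors_of_dvd hmapne
      hmprime.irreducible (by rw [hmap]; exact dvd_pow_self m hp.ne_zero)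
    rwa [associated_iff_eq.mp hassoc]
  have hram : Ideal.ramificationIdx' m₀ m = p := by
    refine Ideal.ramificationIdx'_spec (le_of_eq hmap) ?_
    rw [hmap]
    intro hle
    have h1 : π ^ p ∈ m ^ p := by
      rw [hπ', Ideal.span_singleton_pow]
      exact Ideal.mem_span_singleton_self _
    have h2 := hle h1
    rw [hπ', Ideal.span_singleton_pow, Ideal.mem_span_singleton] at h2
    have := (pow_dvd_pow_iff hπ0 hπu).mp h2
    omega
  have hmsymm : m = Ideal.map (e.symm : S₀ →+* R) m₀ := by
    rw [hm₀, Ideal.map_map]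
    have : ((e.symm : S₀ →+* R).comp (e : R →+* S₀)) = RingHom.id R := by
      ext r; exact e.symm_apply_apply r
    rw [this, Ideal.map_id]
  have hcomap : Ideal.comap (algebraMap S₀ R) m = m₀ := by
    ext s
    rw [Ideal.mem_comap, halg,
      (IsLocalRing.maximalIdeal.isMaximal R).isPrime.pow_mem_iff_mem p hp.pos, hm₀,
      show Ideal.map ((e : R ≃+* S₀) : R →+* S₀) m = Ideal.map (e : R ≃+* S₀) m from rfl,
      Ideal.mem_map_of_equiv (e : R ≃+* S₀)]
    constructor
    · intro h
      exact ⟨e.symm s, h, e.apply_symm_apply s⟩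
    · rintro ⟨r, hr, rfl⟩
      rwa [e.symm_apply_apply]
  have hin : Ideal.inertiaDeg' m₀ m
      = finrank (frobenius κ p).fieldRange κ := by
    letI : Algebra (S₀ ⧸ m₀) (R ⧸ m) :=
      Ideal.Quotient.algebraQuotientOfLEComap (le_of_eq hcomap.symm)
    rw [Ideal.inertiaDeg', dif_pos hcomap]
    refine finrank_eq_of_equiv_equiv'
      ((Ideal.quotientEquiv m₀ m (e.symm : S₀ ≃+* R) hmsymm).trans (frobRangeEquiv κ p))
      (RingEquiv.refl (R ⧸ m) : (R ⧸ m) ≃+* κ) ?_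
    ext s
    show ((frobRangeEquiv κ p ((Ideal.quotientEquiv m₀ m (e.symm : S₀ ≃+* R) hmsymm)
      (Ideal.Quotient.mk m₀ s)) : κ)) = _
    show (Ideal.Quotient.mk m (e.symm s)) ^ p = Ideal.Quotient.mk m (algebraMap S₀ R s)
    rw [halg, map_pow]
  have hsum := Ideal.sum_ramification_inertia (R := S₀) (S := R) (p := m₀) F K hm0ne
  refine (Eq.trans ?_ hsum).symm
  exact ((Finset.sum_eq_single_of_mem m ((@Multiset.mem_toFinset _ (fun a b => Classical.propDecidable (a = b)) _ _).mpr hmm)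
    (fun b hb hne => absurd (huniq b ((@Multiset.mem_toFinset _ (fun a b => Classical.propDecidable (a = b)) _ _).mp hb)) hne)).trans
    (by rw [hram, hin])).symm
end

section
/- Let S be an excellent Dedekind scheme of equal characteristic p > 0 with field of rational functions K. Then the following are equivalent: (i) there exists a closed point x ∈ S with κ(x) perfect; (ii) for every closed point x ∈ S, κ(x) is perfect; (iii) [K : K^p] = p. -/
open Module UniqueFactorizationMonoid

section Core0

theorem inertia_one_iff (A B : Type*) [CommRing A] [CommRing B] [Algebra A B]
    (P : Ideal A) [P.IsMaximal] (Q : Ideal B) [Q.IsMaximal] [Q.LiesOver P] :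
    Module.finrank (A ⧸ P) (B ⧸ Q) = 1 ↔ Function.Surjective (algebraMap (A ⧸ P) (B ⧸ Q)) := by
  letI : Field (A ⧸ P) := Ideal.Quotient.field P
  letI : Field (B ⧸ Q) := Ideal.Quotient.field Q
  constructor
  · intro h w
    obtain ⟨c, hc⟩ := (finrank_eq_one_iff_of_nonzero' (1 : B ⧸ Q) one_ne_zero).mp h w
    exact ⟨c, by rw [← hc, Algebra.smul_def, mul_one]⟩
  · intro h
    refine (finrank_eq_one_iff_of_nonzero' (1 : B ⧸ Q) one_ne_zero).mpr fun w => ?_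
    obtain ⟨c, hc⟩ := h w
    exact ⟨c, by rw [Algebra.smul_def, mul_one]; exact hc⟩

/-- In a cancellative monoid with zero, if `q` is prime, `n ≠ 0` and `q^(n+1) ∣ a^n`,
then `q^2 ∣ a`. -/
theorem sq_dvd_of_pow_succ_dvd_pow {M₀ : Type*} [CommMonoidWithZero M₀] [IsCancelMulZero M₀] {q a : M₀}
    (hq : Prime q) {n : ℕ} (hn : n ≠ 0) (h : q ^ (n + 1) ∣ a ^ n) : q ^ 2 ∣ a := by
  have hqa : q ∣ a := hq.dvd_of_dvd_pow (dvd_trans (dvd_pow_self q (Nat.succ_ne_zero n)) h)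
  obtain ⟨b, rfl⟩ := hqa
  rw [mul_pow, pow_succ] at h
  have h3 : q ∣ b ^ n := (mul_dvd_mul_iff_left (pow_ne_zero n hq.ne_zero)).mp h
  obtain ⟨c, rfl⟩ := hq.dvd_of_dvd_pow h3
  exact ⟨c, by rw [sq, mul_assoc]⟩

end Core0

section Core
set_option linter.unusedSectionVars false

variable (p : ℕ) [Fact p.Prime]
variable (A K M : Type) [CommRing A] [IsDomain A] [IsDedekindDomain A]
  [Field K] [Field M] [Algebra A K] [IsFractionRing A K]
  [Algebra K M] [Algebra A M] [IsScalarTower A K M] [CharP M p]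
  [FiniteDimensional K M]

include K

local notation "BB" => integralClosure A M

theorem algebraMap_AM_injective : Function.Injective (algebraMap A M) := by
  rw [IsScalarTower.algebraMap_eq A K M]
  exact (algebraMap K M).injective.comp (IsFractionRing.injective A K)

theorem exists_pth_root_in_A
    (hexp : ∀ x : M, x ^ p ∈ (algebraMap K M).range)
    (x : integralClosure A M) : ∃ a : A, algebraMap A M a = (x : M) ^ p := by
  obtain ⟨y, hy⟩ := hexp (x : M)
  have hyint : IsIntegral A y := by
    have h1 : IsIntegral A ((x : M) ^ p) := (IsIntegral.pow x.2 p)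
    rw [← hy] at h1
    exact IsIntegral.tower_bot (algebraMap K M).injective h1
  obtain ⟨a, ha⟩ := IsIntegrallyClosed.isIntegral_iff.mp hyint
  exact ⟨a, by rw [IsScalarTower.algebraMap_apply A K M, ha, hy]⟩

theorem core_dedekind [Module.Finite A (integralClosure A M)] :
    IsDedekindDomain (integralClosure A M) := by
  haveI : IsFractionRing BB M :=
    integralClosure.isFractionRing_of_finite_extension (A := A) K M
  haveI hN : IsNoetherianRing BB :=
    isNoetherianRing_iff.mpr (isNoetherian_of_tower A
      (isNoetherian_of_isNoetherianRing_of_finite A BB))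
  haveI : Algebra.IsIntegral A BB := IsIntegralClosure.isIntegral_algebra A (A := BB) M
  exact { hN, Ring.DimensionLEOne.integralClosure (R := A) M,
    (isIntegrallyClosed_iff M).mpr fun {x} hx =>
      ⟨(⟨x, isIntegral_trans (R := A) _ hx⟩ : integralClosure A M), rfl⟩ with : IsDedekindDomain BB }

/-- Setup: a unique maximal ideal `Q` above `P`, whose `e * f` equals `[M : K]`. -/
theorem core_setup (hexp : ∀ x : M, x ^ p ∈ (algebraMap K M).range)
    [Module.Finite A (integralClosure A M)]
    (P : Ideal A) [P.IsMaximal] (hP : P ≠ ⊥) :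
    ∃ Q : Ideal (integralClosure A M), Q.IsMaximal ∧ Q ≠ ⊥ ∧
      Q.comap (algebraMap A (integralClosure A M)) = P ∧
      Ideal.map (algebraMap A (integralClosure A M)) P ≤ Q ∧
      Ideal.ramificationIdx' P Q *
        Ideal.inertiaDeg' P Q = finrank K M := by
  classical
  haveI : IsFractionRing BB M :=
    integralClosure.isFractionRing_of_finite_extension (A := A) K M
  haveI : IsDedekindDomain BB := core_dedekind A K M
  haveI : Algebra.IsIntegral A BB := IsIntegralClosure.isIntegral_algebra A (A := BB) M
  have injAB : Function.Injective (algebraMap A BB) := by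
    intro a b h
    apply algebraMap_AM_injective A K M
    rw [IsScalarTower.algebraMap_apply A BB M, IsScalarTower.algebraMap_apply A BB M (x := b), h]
  have hker : RingHom.ker (algebraMap A BB) ≤ P := by
    rw [(RingHom.injective_iff_ker_eq_bot _).mp injAB]
    exact bot_le
  obtain ⟨Q, hQmax, hQP⟩ := Ideal.exists_ideal_over_maximal_of_isIntegral P hker
  have hQ0 : Q ≠ ⊥ := by
    intro h
    apply hP
    rw [← hQP, h, ← RingHom.ker_eq_comap_bot, (RingHom.injective_iff_ker_eq_bot _).mp injAB]
  have hPBQ : Ideal.map (algebraMap A BB) P ≤ Q := Ideal.map_le_iff_le_comap.mpr hQP.ge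
  have hPB0 : Ideal.map (algebraMap A BB) P ≠ ⊥ := by
    rwa [Ne, Ideal.map_eq_bot_iff_of_injective injAB]
  -- uniqueness of primes over P
  have key : ∀ Q₁ Q₂ : Ideal BB, Q₁.IsPrime → Q₂.IsPrime →
      Q₁.comap (algebraMap A BB) = P → Q₂.comap (algebraMap A BB) = P → Q₁ ≤ Q₂ := by
    intro Q₁ Q₂ h1 h2 hc1 hc2 x hx
    obtain ⟨a, ha⟩ := exists_pth_root_in_A p A K M hexp x
    have haB : algebraMap A BB a = x ^ p := by
      have h2 : algebraMap BB M (algebraMap A BB a) = algebraMap BB M (x ^ p) := by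
        rw [← IsScalarTower.algebraMap_apply A BB M, map_pow, ha]
        rfl
      exact IsFractionRing.injective BB M h2
    have haP : a ∈ P := by
      rw [← hc1]
      show algebraMap A BB a ∈ Q₁
      rw [haB]
      exact Ideal.pow_mem_of_mem Q₁ hx p (Fact.out : p.Prime).pos
    have : (x : BB) ^ p ∈ Q₂ := by
      rw [← haB]
      rw [← hc2] at haP
      exact haP
    exact h2.mem_of_pow_mem p this
  -- comap of any prime containing the image of P is P
  have hcomap : ∀ Q' : Ideal BB, Q'.IsPrime → Ideal.map (algebraMap A BB) P ≤ Q' →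
      Q'.comap (algebraMap A BB) = P := by
    intro Q' hQ' hle
    have hne : Q'.comap (algebraMap A BB) ≠ ⊤ := fun htop => hQ'.ne_top (by
      rw [Ideal.eq_top_iff_one] at htop ⊢
      simpa using htop)
    exact ((‹P.IsMaximal› : P.IsMaximal).eq_of_le hne (Ideal.map_le_iff_le_comap.mp hle)).symm
  have hQprime : Q.IsPrime := hQmax.isPrime
  have hfac : (factors (Ideal.map (algebraMap A BB) P)).toFinset = {Q} := by
    ext Q'
    simp only [Multiset.mem_toFinset, Finset.mem_singleton]
    constructor
    · intro hQ'
      have hp' : Prime Q' := prime_of_factor _ hQ'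
      have hQ'prime : Q'.IsPrime := Ideal.isPrime_of_prime hp'
      have hle : Ideal.map (algebraMap A BB) P ≤ Q' :=
        Ideal.le_of_dvd (dvd_of_mem_factors hQ')
      have hc := hcomap Q' hQ'prime hle
      exact le_antisymm (key Q' Q hQ'prime hQprime hc hQP) (key Q Q' hQprime hQ'prime hQP hc)
    · rintro rfl
      rw [factors_eq_normalizedFactors, Ideal.mem_normalizedFactors_iff hPB0]
      exact ⟨hQprime, hPBQ⟩
  have hsum := Ideal.sum_ramification_inertia (S := BB) (p := P) K M hP
  rw [IsDedekindDomain.primesOverFinset, hfac, Finset.sum_singleton] at hsum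
  exact ⟨Q, hQmax, hQ0, hQP, hPBQ, hsum⟩

set_option maxHeartbeats 1000000 in
set_option synthInstance.maxHeartbeats 400000 in
theorem core_finrank_le (hexp : ∀ x : M, x ^ p ∈ (algebraMap K M).range)
    [Module.Finite A (integralClosure A M)]
    (P : Ideal A) [P.IsMaximal] (hP : P ≠ ⊥)
    (hsurj : Function.Surjective (fun y : A ⧸ P => y ^ p)) :
    finrank K M ≤ p := by
  classical
  haveI : IsFractionRing BB M :=
    integralClosure.isFractionRing_of_finite_extension (A := A) K M
  haveI : IsDedekindDomain BB := core_dedekind A K M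
  haveI : CharP BB p :=
    RingHom.charP (algebraMap BB M) (IsFractionRing.injective BB M) p
  haveI : ExpChar BB p := ExpChar.prime (Fact.out : p.Prime)
  obtain ⟨Q, hQmax, hQ0, hQP, hPBQ, hef⟩ := core_setup p A K M hexp P hP
  haveI := hQmax
  haveI : Q.LiesOver P := ⟨hQP.symm⟩
  have hQprime : Q.IsPrime := hQmax.isPrime
  have hf : Ideal.inertiaDeg' P Q = 1 := by
    rw [Ideal.inertiaDeg'_algebraMap]
    have hsurj2 : Function.Surjective (algebraMap (A ⧸ P) (BB ⧸ Q)) := by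
      intro z
      obtain ⟨x, rfl⟩ := Ideal.Quotient.mk_surjective z
      obtain ⟨a, ha⟩ := exists_pth_root_in_A p A K M hexp x
      have haB : algebraMap A BB a = x ^ p := by
        have h2 : algebraMap BB M (algebraMap A BB a) = algebraMap BB M (x ^ p) := by
          rw [← IsScalarTower.algebraMap_apply A BB M, map_pow, ha]; rfl
        exact IsFractionRing.injective BB M h2
      obtain ⟨cbar, hc⟩ := hsurj (Ideal.Quotient.mk P a)
      obtain ⟨c, rfl⟩ := Ideal.Quotient.mk_surjective cbar
      refine ⟨Ideal.Quotient.mk P c, ?_⟩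
      have hmk : algebraMap (A ⧸ P) (BB ⧸ Q) (Ideal.Quotient.mk P c) =
          Ideal.Quotient.mk Q (algebraMap A BB c) := rfl
      rw [hmk, Ideal.Quotient.eq]
      have hcP : c ^ p - a ∈ P := by
        have hc' : (Ideal.Quotient.mk P c) ^ p = Ideal.Quotient.mk P a := hc
        rwa [← map_pow, Ideal.Quotient.eq] at hc'
      have hpow : (algebraMap A BB c - x) ^ p ∈ Q := by
        rw [sub_pow_char, ← map_pow, ← haB, ← map_sub]
        exact hPBQ (Ideal.mem_map_of_mem _ hcP)
      exact hQprime.mem_of_pow_mem p hpow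
    exact (inertia_one_iff A BB P Q).mpr hsurj2
  have he : Ideal.ramificationIdx' P Q ≤ p := by
    have hlt : Ideal.ramificationIdx' P Q < p + 1 := by
      apply Ideal.ramificationIdx'_lt
      intro hle
      have hQ2lt : Q ^ 2 < Q ^ 1 :=
        (Ideal.pow_right_strictAnti Q hQ0 hQprime.ne_top) one_lt_two
      rw [pow_one] at hQ2lt
      obtain ⟨x, hx1, hx2⟩ := SetLike.exists_of_lt hQ2lt
      obtain ⟨a, ha⟩ := exists_pth_root_in_A p A K M hexp x
      have haB : algebraMap A BB a = x ^ p := by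
        have h2 : algebraMap BB M (algebraMap A BB a) = algebraMap BB M (x ^ p) := by
          rw [← IsScalarTower.algebraMap_apply A BB M, map_pow, ha]; rfl
        exact IsFractionRing.injective BB M h2
      have haP : a ∈ P := by
        rw [← hQP]
        show algebraMap A BB a ∈ Q
        rw [haB]
        exact Ideal.pow_mem_of_mem Q hx1 p (Fact.out : p.Prime).pos
      have hxp : x ^ p ∈ Q ^ (p + 1) := by
        rw [← haB]
        exact hle (Ideal.mem_map_of_mem _ haP)
      have hdvd : Q ^ (p + 1) ∣ Ideal.span {x} ^ p := by
        rw [Ideal.span_singleton_pow]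
        exact Ideal.dvd_iff_le.mpr ((Ideal.span_le).mpr (Set.singleton_subset_iff.mpr hxp))
      have hQpr : Prime Q := Ideal.prime_of_isPrime hQ0 hQprime
      have hsq := sq_dvd_of_pow_succ_dvd_pow hQpr (Fact.out : p.Prime).ne_zero hdvd
      exact hx2 ((Ideal.le_of_dvd hsq) (Ideal.mem_span_singleton_self x))
    omega
  rw [← hef, hf, mul_one]
  exact he

set_option maxHeartbeats 1000000 in
set_option synthInstance.maxHeartbeats 400000 in
theorem core_surj (hexp : ∀ x : M, x ^ p ∈ (algebraMap K M).range)
    (hroot : ∀ z : K, ∃ y : M, y ^ p = algebraMap K M z)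
    [Module.Finite A (integralClosure A M)]
    (P : Ideal A) [P.IsMaximal] (hP : P ≠ ⊥) (hd : finrank K M = p) :
    Function.Surjective (fun y : A ⧸ P => y ^ p) := by
  classical
  haveI : IsFractionRing BB M :=
    integralClosure.isFractionRing_of_finite_extension (A := A) K M
  haveI : IsDedekindDomain BB := core_dedekind A K M
  obtain ⟨Q, hQmax, hQ0, hQP, hPBQ, hef⟩ := core_setup p A K M hexp P hP
  rw [hd] at hef
  haveI := hQmax
  haveI : Q.LiesOver P := ⟨hQP.symm⟩
  have hQprime : Q.IsPrime := hQmax.isPrime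
  have hp2 : 2 ≤ p := (Fact.out : p.Prime).two_le
  have injAB : Function.Injective (algebraMap A BB) := by
    intro a b h
    apply algebraMap_AM_injective A K M
    rw [IsScalarTower.algebraMap_apply A BB M, IsScalarTower.algebraMap_apply A BB M (x := b), h]
  have hPB0 : Ideal.map (algebraMap A BB) P ≠ ⊥ := by
    rwa [Ne, Ideal.map_eq_bot_iff_of_injective injAB]
  have hrootB : ∀ a : A, ∃ y : BB, y ^ p = algebraMap A BB a := by
    intro a
    obtain ⟨y, hy⟩ := hroot (algebraMap A K a)
    have hyB : y ∈ integralClosure A M := by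
      refine ⟨Polynomial.X ^ p - Polynomial.C a,
        Polynomial.monic_X_pow_sub_C a (Fact.out : p.Prime).ne_zero, ?_⟩
      have heval : Polynomial.eval₂ (algebraMap A M) y (Polynomial.X ^ p - Polynomial.C a) =
          y ^ p - algebraMap A M a := by simp
      rw [heval, hy, ← IsScalarTower.algebraMap_apply A K M, sub_self]
    refine ⟨⟨y, hyB⟩, ?_⟩
    apply IsFractionRing.injective BB M
    rw [map_pow, ← IsScalarTower.algebraMap_apply A BB M]
    show y ^ p = _
    rw [hy, ← IsScalarTower.algebraMap_apply A K M]
  have hmap2 : Ideal.map (algebraMap A BB) P ≤ Q ^ 2 := by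
    rw [Ideal.map_le_iff_le_comap]
    intro a ha
    obtain ⟨y, hy⟩ := hrootB a
    have hyQ : y ∈ Q := hQprime.mem_of_pow_mem p
      (by rw [hy]; exact hPBQ (Ideal.mem_map_of_mem _ ha))
    show algebraMap A BB a ∈ Q ^ 2
    rw [← hy]
    exact Ideal.pow_le_pow_right hp2 (Ideal.pow_mem_pow hyQ p)
  have he2 : 2 ≤ Ideal.ramificationIdx' P Q := by
    rw [Ideal.IsDedekindDomain.ramificationIdx'_eq_normalizedFactors_count hPB0 hQprime hQ0]
    have h2 : Q ^ 2 ∣ Ideal.map (algebraMap A BB) P := Ideal.dvd_iff_le.mpr hmap2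
    have hQirr : Irreducible Q := (Ideal.prime_of_isPrime hQ0 hQprime).irreducible
    rwa [dvd_iff_normalizedFactors_le_normalizedFactors (pow_ne_zero _ hQ0) hPB0,
      normalizedFactors_pow, normalizedFactors_irreducible hQirr, normalize_eq,
      Multiset.nsmul_singleton, ← Multiset.le_count_iff_replicate_le] at h2
  have hf1 : Ideal.inertiaDeg' P Q = 1 := by
    have hfdvd : Ideal.inertiaDeg' P Q ∣ p := by
      rw [← hef]; exact dvd_mul_left _ _
    rcases ((Fact.out : p.Prime).eq_one_or_self_of_dvd _ hfdvd) with h1 | hp'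
    · exact h1
    · exfalso
      rw [hp'] at hef
      have he1 : Ideal.ramificationIdx' P Q = 1 :=
        Nat.eq_of_mul_eq_mul_right (Fact.out : p.Prime).pos (by rw [hef, one_mul])
      omega
  have hsurj2 : Function.Surjective (algebraMap (A ⧸ P) (BB ⧸ Q)) := by
    have hfr : Module.finrank (A ⧸ P) (BB ⧸ Q) = 1 := by
      rw [← Ideal.inertiaDeg'_algebraMap]; exact hf1
    exact (inertia_one_iff A BB P Q).mp hfr
  intro abar
  obtain ⟨a, rfl⟩ := Ideal.Quotient.mk_surjective abar
  obtain ⟨y, hy⟩ := hrootB a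
  obtain ⟨cbar, hc⟩ := hsurj2 (Ideal.Quotient.mk Q y)
  obtain ⟨c, rfl⟩ := Ideal.Quotient.mk_surjective cbar
  refine ⟨Ideal.Quotient.mk P c, ?_⟩
  show (Ideal.Quotient.mk P c) ^ p = _
  rw [← map_pow, Ideal.Quotient.eq]
  rw [← hQP]
  show algebraMap A BB (c ^ p - a) ∈ Q
  have hcy : algebraMap A BB c - y ∈ Q := by
    have hc' : Ideal.Quotient.mk Q (algebraMap A BB c) = Ideal.Quotient.mk Q y := hc
    exact Ideal.Quotient.eq.mp hc'
  have hrw : algebraMap A BB (c ^ p - a) = (algebraMap A BB c) ^ p - y ^ p := by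
    rw [map_sub, map_pow, hy]
  rw [hrw]
  obtain ⟨d, hd'⟩ := sub_dvd_pow_sub_pow (algebraMap A BB c) y p
  rw [hd']
  exact Ideal.mul_mem_right _ _ hcy

end Core
section Main

variable (p : ℕ) [Fact p.Prime] (A : Type) [CommRing A] [IsDomain A] [IsDedekindDomain A]
  [CharP A p] [CharP (FractionRing A) p]

/-- The Frobenius, as an isomorphism of `K` onto the subfield `K^p`. -/
noncomputable def frobEquiv : FractionRing A ≃+* ((frobenius (FractionRing A) p).fieldRange) :=
  RingEquiv.ofBijective ((frobenius (FractionRing A) p).rangeRestrictField)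
    ⟨fun x y h => frobenius_inj (FractionRing A) p (congrArg Subtype.val h),
     fun z => by
      obtain ⟨x, hx⟩ := RingHom.mem_fieldRange.mp z.2
      exact ⟨x, Subtype.ext hx⟩⟩

set_option maxHeartbeats 1000000 in
set_option synthInstance.maxHeartbeats 400000 in
theorem bridge (hexc : IsExcellentDomain A) (M : Type) [Field M]
    [Algebra (↥((frobenius (FractionRing A) p).fieldRange)) M] [CharP M p]
    [FiniteDimensional (↥((frobenius (FractionRing A) p).fieldRange)) M]
    (hexp : ∀ x : M,
      x ^ p ∈ (algebraMap (↥((frobenius (FractionRing A) p).fieldRange)) M).range)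
    (P : Ideal A) [P.IsMaximal] (hP : P ≠ ⊥) :
    (Function.Surjective (fun y : A ⧸ P => y ^ p) →
      Module.finrank (↥((frobenius (FractionRing A) p).fieldRange)) M ≤ p) ∧
    ((∀ z : ↥((frobenius (FractionRing A) p).fieldRange),
        ∃ y : M, y ^ p = algebraMap _ M z) →
      Module.finrank (↥((frobenius (FractionRing A) p).fieldRange)) M = p →
      Function.Surjective (fun y : A ⧸ P => y ^ p)) := by
  letI iE : Algebra A (↥((frobenius (FractionRing A) p).fieldRange)) :=
    ((frobEquiv p A).toRingHom.comp (algebraMap A (FractionRing A))).toAlgebra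
  haveI hFR : IsFractionRing A (↥((frobenius (FractionRing A) p).fieldRange)) :=
    (IsLocalization.isLocalization_iff_of_ringEquiv (nonZeroDivisors A) (frobEquiv p A)).mp
      inferInstance
  letI iAM : Algebra A M :=
    ((algebraMap (↥((frobenius (FractionRing A) p).fieldRange)) M).comp
      ((frobEquiv p A).toRingHom.comp (algebraMap A (FractionRing A)))).toAlgebra
  haveI iT : IsScalarTower A (↥((frobenius (FractionRing A) p).fieldRange)) M :=
    IsScalarTower.of_algebraMap_eq (fun a => rfl)
  haveI : Module.Finite A (integralClosure A M) := by
    letI iKM : Algebra (FractionRing A) M :=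
      ((algebraMap (↥((frobenius (FractionRing A) p).fieldRange)) M).comp
        (frobEquiv p A).toRingHom).toAlgebra
    haveI : FiniteDimensional (FractionRing A) M :=
      Module.Finite.of_equiv_equiv (frobEquiv p A).symm (RingEquiv.refl M) (by
        ext x
        show algebraMap _ M ((frobEquiv p A) ((frobEquiv p A).symm x)) = _
        rw [RingEquiv.apply_symm_apply]
        rfl)
    exact hexc M _ iKM inferInstance
  exact ⟨fun hs => core_finrank_le p A _ M hexp P hP hs,
    fun hr hd => core_surj p A _ M hexp hr P hP hd⟩

set_option maxHeartbeats 1000000 in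
set_option synthInstance.maxHeartbeats 400000 in
theorem main_thm (hnf : ¬ IsField A) (hexc : IsExcellentDomain A) :
    ((∃ P : Ideal A, P.IsMaximal ∧ Function.Surjective (fun y : A ⧸ P => y ^ p)) ↔
      (∀ P : Ideal A, P.IsMaximal → Function.Surjective (fun y : A ⧸ P => y ^ p))) ∧
    ((∃ P : Ideal A, P.IsMaximal ∧ Function.Surjective (fun y : A ⧸ P => y ^ p)) ↔
      Module.finrank (frobenius (FractionRing A) p).fieldRange (FractionRing A) = p) := by
  have hp2 : 2 ≤ p := (Fact.out : p.Prime).two_le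
  have hEmem : ∀ x : FractionRing A, x ^ p ∈ (frobenius (FractionRing A) p).fieldRange :=
    fun x => ⟨x, by rw [frobenius_def]⟩
  -- every element of K is integral (of exponent one) over E = K^p
  have hint : ∀ x : FractionRing A,
      IsIntegral (↥((frobenius (FractionRing A) p).fieldRange)) x := by
    intro x
    refine ⟨Polynomial.X ^ p - Polynomial.C (⟨x ^ p, hEmem x⟩ :
      ↥((frobenius (FractionRing A) p).fieldRange)),
      Polynomial.monic_X_pow_sub_C _ (Fact.out : p.Prime).ne_zero, ?_⟩
    have heval : Polynomial.eval₂
        (algebraMap (↥((frobenius (FractionRing A) p).fieldRange)) (FractionRing A)) x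
        (Polynomial.X ^ p - Polynomial.C (⟨x ^ p, hEmem x⟩ :
          ↥((frobenius (FractionRing A) p).fieldRange))) =
        x ^ p - algebraMap (↥((frobenius (FractionRing A) p).fieldRange)) (FractionRing A)
          ⟨x ^ p, hEmem x⟩ := by simp
    rw [heval]
    show x ^ p - x ^ p = 0
    rw [sub_self]
  -- (iii) implies perfectness at every maximal ideal
  have hBtoSurj : Module.finrank (frobenius (FractionRing A) p).fieldRange (FractionRing A) = p →
      ∀ P : Ideal A, P.IsMaximal → Function.Surjective (fun y : A ⧸ P => y ^ p) := by
    intro hd P hPmax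
    haveI := hPmax
    have hP0 : P ≠ ⊥ := Ring.ne_bot_of_isMaximal_of_not_isField hPmax hnf
    set T := (⊤ : IntermediateField (↥((frobenius (FractionRing A) p).fieldRange))
      (FractionRing A)) with hTdef
    haveI : CharP ↥T p :=
      RingHom.charP (algebraMap ↥T (FractionRing A)) (algebraMap ↥T (FractionRing A)).injective p
    have htop : Module.finrank (↥((frobenius (FractionRing A) p).fieldRange)) ↥T = p :=
      (IntermediateField.topEquiv.toLinearEquiv.finrank_eq).trans hd
    haveI : FiniteDimensional (↥((frobenius (FractionRing A) p).fieldRange)) ↥T :=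
      FiniteDimensional.of_finrank_pos (by rw [htop]; exact (Fact.out : p.Prime).pos)
    have hexp : ∀ x : ↥T,
        x ^ p ∈ (algebraMap (↥((frobenius (FractionRing A) p).fieldRange)) ↥T).range := by
      intro x
      exact ⟨⟨(x : FractionRing A) ^ p, hEmem _⟩, by apply Subtype.ext; push_cast; rfl⟩
    have hroot : ∀ z : ↥((frobenius (FractionRing A) p).fieldRange),
        ∃ y : ↥T, y ^ p = algebraMap _ ↥T z := by
      intro z
      obtain ⟨x, hx⟩ := RingHom.mem_fieldRange.mp z.2
      refine ⟨⟨x, trivial⟩, ?_⟩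
      apply Subtype.ext
      push_cast
      show x ^ p = (z : FractionRing A)
      rw [← hx, frobenius_def]
    exact (bridge p A hexc ↥T hexp P hP0).2 hroot htop
  -- (i) implies (iii)
  have hiii : (∃ P : Ideal A, P.IsMaximal ∧ Function.Surjective (fun y : A ⧸ P => y ^ p)) →
      Module.finrank (frobenius (FractionRing A) p).fieldRange (FractionRing A) = p := by
    rintro ⟨P, hPmax, hPsurj⟩
    haveI := hPmax
    have hP0 : P ≠ ⊥ := Ring.ne_bot_of_isMaximal_of_not_isField hPmax hnf
    have hPP : P ^ 2 < P := by
      have h := (Ideal.pow_right_strictAnti P hP0 hPmax.ne_top) one_lt_two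
      simpa using h
    obtain ⟨t₀, ht₁, ht₂⟩ := SetLike.exists_of_lt hPP
    set t : FractionRing A := algebraMap A (FractionRing A) t₀ with htdef
    have htE : t ∉ (frobenius (FractionRing A) p).fieldRange := by
      rintro ⟨s, hs⟩
      rw [frobenius_def] at hs
      have hsint : IsIntegral A s := by
        refine ⟨Polynomial.X ^ p - Polynomial.C t₀,
          Polynomial.monic_X_pow_sub_C _ (Fact.out : p.Prime).ne_zero, ?_⟩
        have heval : Polynomial.eval₂ (algebraMap A (FractionRing A)) s
            (Polynomial.X ^ p - Polynomial.C t₀) = s ^ p - algebraMap A (FractionRing A) t₀ := by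
          simp
        rw [heval, hs, sub_self]
      obtain ⟨s₀, hs₀⟩ := IsIntegrallyClosed.isIntegral_iff.mp hsint
      have heq : algebraMap A (FractionRing A) (s₀ ^ p) = algebraMap A (FractionRing A) t₀ := by
        rw [map_pow, hs₀, hs]
      have hps : s₀ ^ p = t₀ := IsFractionRing.injective A (FractionRing A) heq
      have hs₀P : s₀ ∈ P := hPmax.isPrime.mem_of_pow_mem p (by rw [hps]; exact ht₁)
      apply ht₂
      rw [← hps]
      exact Ideal.pow_le_pow_right hp2 (Ideal.pow_mem_pow hs₀P p)
    set T := IntermediateField.adjoin (↥((frobenius (FractionRing A) p).fieldRange))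
      ({t} : Set (FractionRing A)) with hTdef
    haveI : FiniteDimensional (↥((frobenius (FractionRing A) p).fieldRange)) ↥T :=
      IntermediateField.finiteDimensional_adjoin (fun x _ => hint x)
    have hTdeg : Module.finrank (↥((frobenius (FractionRing A) p).fieldRange)) ↥T = p := by
      have hmin : minpoly (↥((frobenius (FractionRing A) p).fieldRange)) t =
          Polynomial.X ^ p - Polynomial.C (⟨t ^ p, hEmem t⟩ :
            ↥((frobenius (FractionRing A) p).fieldRange)) := by
        refine (minpoly.eq_of_irreducible_of_monic ?_ ?_ ?_).symm
        · apply X_pow_sub_C_irreducible_of_prime (Fact.out : p.Prime)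
          intro b hb
          apply htE
          have hbp : (b : FractionRing A) ^ p = t ^ p := by
            have := congrArg Subtype.val hb
            push_cast at this
            exact this
          have hbt : (b : FractionRing A) = t := by
            apply frobenius_inj (FractionRing A) p
            rw [frobenius_def, frobenius_def, hbp]
          rw [← hbt]
          exact b.2
        · have : Polynomial.aeval t (Polynomial.X ^ p - Polynomial.C (⟨t ^ p, hEmem t⟩ :
              ↥((frobenius (FractionRing A) p).fieldRange))) =
              t ^ p - algebraMap _ (FractionRing A) (⟨t ^ p, hEmem t⟩ :
                ↥((frobenius (FractionRing A) p).fieldRange)) := by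
            simp
          rw [this]
          show t ^ p - t ^ p = 0
          rw [sub_self]
        · exact Polynomial.monic_X_pow_sub_C _ (Fact.out : p.Prime).ne_zero
      rw [IntermediateField.adjoin.finrank (hint t), hmin, Polynomial.natDegree_X_pow_sub_C]
    have hall : ∀ u : FractionRing A, u ∈ T := by
      intro u
      set U := IntermediateField.adjoin (↥((frobenius (FractionRing A) p).fieldRange))
        ({t, u} : Set (FractionRing A)) with hUdef
      haveI : FiniteDimensional (↥((frobenius (FractionRing A) p).fieldRange)) ↥U :=
        IntermediateField.finiteDimensional_adjoin (fun x _ => hint x)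
      haveI : CharP ↥U p := RingHom.charP (algebraMap ↥U (FractionRing A))
        (algebraMap ↥U (FractionRing A)).injective p
      have hexpU : ∀ x : ↥U,
          x ^ p ∈ (algebraMap (↥((frobenius (FractionRing A) p).fieldRange)) ↥U).range := by
        intro x
        exact ⟨⟨(x : FractionRing A) ^ p, hEmem _⟩, by apply Subtype.ext; push_cast; rfl⟩
      have hle := (bridge p A hexc ↥U hexpU P hP0).1 hPsurj
      have hTU : T ≤ U := IntermediateField.adjoin.mono _ _ _
        (Set.singleton_subset_iff.mpr (Set.mem_insert t {u}))
      have hEq : T = U := IntermediateField.eq_of_le_of_finrank_le hTU (by rw [hTdeg]; exact hle)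
      rw [hEq]
      exact IntermediateField.subset_adjoin _ _ (Set.mem_insert_of_mem t rfl)
    have hTtop : T = ⊤ := le_antisymm le_top (fun x _ => hall x)
    refine (IntermediateField.topEquiv.toLinearEquiv.finrank_eq).symm.trans ?_
    rw [← hTtop]
    exact hTdeg
  obtain ⟨P₀, hP₀⟩ := Ideal.exists_maximal A
  refine ⟨⟨fun h => hBtoSurj (hiii h), fun h => ⟨P₀, hP₀, h P₀ hP₀⟩⟩,
    ⟨hiii, fun hd => ⟨P₀, hP₀, hBtoSurj hd P₀ hP₀⟩⟩⟩

end Main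

theorem perfect_residue_fields_iff_degree_of_imperfection_one
    (p : ℕ) [Fact p.Prime] (A : Type) [CommRing A] [IsDomain A] [IsDedekindDomain A]
    (hnf : ¬ IsField A) [CharP A p] [CharP (FractionRing A) p]
    (hexc : IsExcellentDomain A) :
    ((∃ P : Ideal A, P.IsMaximal ∧ Function.Surjective (fun y : A ⧸ P => y ^ p)) ↔
      (∀ P : Ideal A, P.IsMaximal → Function.Surjective (fun y : A ⧸ P => y ^ p))) ∧
    ((∃ P : Ideal A, P.IsMaximal ∧ Function.Surjective (fun y : A ⧸ P => y ^ p)) ↔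
      Module.finrank (frobenius (FractionRing A) p).fieldRange (FractionRing A) = p) :=
  main_thm p A hnf hexc
end

section
/- Let K be a field, let B ⊆ A be finite-dimensional commutative K-algebras with B a field and B ≠ A, and let K̂ be a field extension of K such that A ⊗_K K̂ is non-reduced. Then there exists a nilpotent element y ∈ A ⊗_K K̂ which is not contained in the image of B ⊗_K K̂. -/
/-!
Statement 7: Let `K` be a field, `B ⊆ A` finite-dimensional commutative `K`-algebras with `B`
a field and `B ≠ A`, and let `K̂` be a field extension of `K` such that `A ⊗_K K̂` is
non-reduced.  Then there exists a nilpotent element of `A ⊗_K K̂` not contained in the image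
of `B ⊗_K K̂`.
-/

open TensorProduct in
theorem exists_nilpotent_not_in_image
    (K : Type) [Field K] (B : Type) [Field B] [Algebra K B] [FiniteDimensional K B]
    (A : Type) [CommRing A] [Algebra K A] [FiniteDimensional K A]
    (f : B →ₐ[K] A) (hinj : Function.Injective f) (hne : ¬ Function.Surjective f)
    (Khat : Type) [Field Khat] [Algebra K Khat]
    (hnr : ¬ IsReduced (A ⊗[K] Khat)) :
    ∃ y : A ⊗[K] Khat, IsNilpotent y ∧
      y ∉ Set.range (Algebra.TensorProduct.map f (AlgHom.id K Khat)) := by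
  -- get a nonzero nilpotent n
  obtain ⟨n, hn_nil, hn_ne⟩ : ∃ n : A ⊗[K] Khat, IsNilpotent n ∧ n ≠ 0 := by
    by_contra h
    push_neg at h
    exact hnr ⟨fun x hx => by_contra fun hx0 => hx0 (h x hx)⟩
  by_cases hcase : n ∈ Set.range (Algebra.TensorProduct.map f (AlgHom.id K Khat))
  swap
  · exact ⟨n, hn_nil, hcase⟩
  obtain ⟨ν, hν⟩ := hcase
  have hν_ne : ν ≠ 0 := by rintro rfl; simp at hν; exact hn_ne hν.symm
  -- α not in the range of f
  obtain ⟨α, hα⟩ : ∃ α : A, α ∉ Set.range f := by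
    by_contra h; push_neg at h
    exact hne fun a => h a
  -- B-module structure on A via f
  letI : Algebra B A := f.toRingHom.toAlgebra
  have hsmul : ∀ (b : B) (a : A), b • a = f b * a := fun b a => rfl
  have hα' : α ∉ Submodule.span B {(1 : A)} := by
    intro h
    rw [Submodule.mem_span_singleton] at h
    obtain ⟨b, hb⟩ := h
    exact hα ⟨b, by rw [← hb, hsmul, mul_one]⟩
  obtain ⟨g0, hg0α, hg0p⟩ := Submodule.exists_dual_map_eq_bot_of_notMem hα'
    (haveI := Module.Free.of_divisionRing B (A ⧸ Submodule.span B {(1 : A)}); Module.Projective.of_free)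
  have hg0one : g0 1 = 0 := by
    have : g0 1 ∈ (Submodule.span B {(1 : A)}).map g0 :=
      Submodule.mem_map_of_mem (Submodule.mem_span_singleton_self 1)
    rwa [hg0p, Submodule.mem_bot] at this
  set g : A →ₗ[B] B := (g0 α)⁻¹ • g0 with hg
  have hgα : g α = 1 := by simp [hg, inv_mul_cancel₀ hg0α]
  have hgone : g 1 = 0 := by simp [hg, hg0one]
  -- base change of g
  haveI : IsScalarTower K B A := IsScalarTower.of_algebraMap_eq fun k =>
    (f.commutes k).symm
  set G : A ⊗[K] Khat →ₗ[K] B ⊗[K] Khat :=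
    TensorProduct.map (g.restrictScalars K) LinearMap.id with hG
  have key : ∀ (μ : B ⊗[K] Khat) (x : A ⊗[K] Khat),
      G ((Algebra.TensorProduct.map f (AlgHom.id K Khat)) μ * x) = μ * G x := by
    intro μ x
    induction μ using TensorProduct.induction_on with
    | zero => simp
    | tmul b k =>
      induction x using TensorProduct.induction_on with
      | zero => simp
      | tmul a k' =>
        simp only [Algebra.TensorProduct.map_tmul, AlgHom.coe_id, id_eq,
          Algebra.TensorProduct.tmul_mul_tmul, hG, TensorProduct.map_tmul,
          LinearMap.id_coe]
        have : g (f b * a) = b * g a := by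
          rw [← hsmul, map_smul]; rfl
        rw [LinearMap.coe_restrictScalars, this]
      | add x₁ x₂ h₁ h₂ =>
        rw [mul_add, map_add, h₁, h₂, map_add, mul_add]
    | add μ₁ μ₂ h₁ h₂ =>
      rw [map_add, add_mul, map_add, h₁, h₂, add_mul]
  refine ⟨n * (α ⊗ₜ 1), (Commute.all n _).isNilpotent_mul_right hn_nil, ?_⟩
  rintro ⟨b, hb⟩
  have h1 : G (n * (α ⊗ₜ 1)) = ν := by
    rw [← hν, key]
    have hh : G (α ⊗ₜ 1) = 1 := by simp [hG, hgα, Algebra.TensorProduct.one_def]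
    rw [hh, mul_one]
  have h2 : G (n * (α ⊗ₜ 1)) = 0 := by
    rw [← hb]
    have : (Algebra.TensorProduct.map f (AlgHom.id K Khat)) b =
        (Algebra.TensorProduct.map f (AlgHom.id K Khat)) b * 1 := by ring
    rw [this, key]
    simp [hG, Algebra.TensorProduct.one_def, hgone]
  exact hν_ne (h1 ▸ h2)
end
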